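/- Let G be an r-regular K3-irregular simple graph on n vertices. Then n ≤ C(r, 2) − ⌈r/2⌉ + 1, where C(r,2) is the binomial coefficient (r choose 2). -/

import Mathlib

/-!
Triangles through `v` correspond to edges inside the neighbourhood `N(v)`, so in an `r`-regular
graph `K3deg v = C(r,2) - m`, where `m` is the number of non-adjacent pairs in `N(v)`. If
`m < ⌈r/2⌉`, these pairs cover fewer than `r` vertices of `N(v)`, so some neighbour `u` is
adjacent to all of `N(v) \ {u}`. By regularity `u` and `v` then have the same neighbours apart
from each other, so swapping them is an automorphism and `K3deg u = K3deg v`. Hence in a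
`K3`-irregular graph the `n` triangle-degrees are distinct values in `[0, C(r,2) - ⌈r/2⌉]`.
-/

/-- The `K₃`-degree (triangle-degree) of a vertex `v` in a finite simple graph `G`:
the number of triangles (3-cliques) of `G` containing `v`. -/
def K3deg {V : Type*} (G : SimpleGraph V) [Fintype V] [DecidableEq V] [DecidableRel G.Adj]
    (v : V) : ℕ :=
  ((G.cliqueFinset 3).filter (fun t => v ∈ t)).card

open Finset SimpleGraph

theorem Finset.exists_mem_forall_notMem_of_mul_card_lt {α : Type*} [DecidableEq α] {k : ℕ}
    {s : Finset α} {F : Finset (Finset α)} (hF : ∀ e ∈ F, #e ≤ k) (h : k * #F < #s) :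
    ∃ u ∈ s, ∀ e ∈ F, u ∉ e := by
  have hcard : #(F.biUnion id) < #s :=
    (card_biUnion_le_card_mul F id k hF).trans_lt (by rwa [mul_comm])
  obtain ⟨u, hus, hu⟩ := exists_mem_notMem_of_card_lt_card hcard
  exact ⟨u, hus, fun e he hue => hu (mem_biUnion.mpr ⟨e, he, hue⟩)⟩

theorem SimpleGraph.IsNClique.map_iso {V W : Type*} {G : SimpleGraph V} {G' : SimpleGraph W}
    (e : G ≃g G') {n : ℕ} {s : Finset V} (h : G.IsNClique n s) :
    G'.IsNClique n (s.map e.toEquiv.toEmbedding) := by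
  refine ⟨?_, (card_map _).trans h.card_eq⟩
  rintro _ hx' _ hy' hxy
  obtain ⟨x, hx, rfl⟩ := mem_map.mp hx'
  obtain ⟨y, hy, rfl⟩ := mem_map.mp hy'
  exact e.map_adj_iff.mpr (h.isClique hx hy fun hxy' => hxy (by rw [hxy']))

theorem SimpleGraph.swap_adj_swap_iff {V : Type*} [DecidableEq V] {G : SimpleGraph V} {u v : V}
    (h : ∀ w, w ≠ u → w ≠ v → (G.Adj u w ↔ G.Adj v w)) (x y : V) :
    G.Adj (Equiv.swap u v x) (Equiv.swap u v y) ↔ G.Adj x y := by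
  simp only [Equiv.swap_apply_def]
  split_ifs <;> subst_vars <;> grind [G.adj_comm, SimpleGraph.irrefl]

section K3deg

variable {V : Type*} [Fintype V] [DecidableEq V] {G : SimpleGraph V} [DecidableRel G.Adj]

theorem K3deg_iso {W : Type*} [Fintype W] [DecidableEq W] {G' : SimpleGraph W}
    [DecidableRel G'.Adj] (e : G ≃g G') (v : V) : K3deg G' (e v) = K3deg G v := by
  refine (card_nbij' (·.map e.toEquiv.toEmbedding) (·.map e.symm.toEquiv.toEmbedding)
    ?_ ?_ ?_ ?_).symm
  · intro t ht
    simp only [coe_filter, mem_cliqueFinset_iff, Set.mem_ofPred_eq] at ht ⊢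
    exact ⟨ht.1.map_iso e, mem_map_of_mem _ ht.2⟩
  · intro t ht
    simp only [coe_filter, mem_cliqueFinset_iff, Set.mem_ofPred_eq] at ht ⊢
    exact ⟨ht.1.map_iso e.symm, e.symm_apply_apply v ▸ mem_map_of_mem _ ht.2⟩
  · intro t _
    simp [Finset.map_map]
  · intro t _
    simp [Finset.map_map]

theorem K3deg_eq_of_twins {u v : V} (h : ∀ w, w ≠ u → w ≠ v → (G.Adj u w ↔ G.Adj v w)) :
    K3deg G u = K3deg G v := by
  let e : G ≃g G := ⟨Equiv.swap u v, swap_adj_swap_iff h _ _⟩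
  simpa [e] using K3deg_iso e v

theorem twins_of_forall_adj_of_degree_eq {u v : V} (huv : G.Adj v u)
    (hdeg : G.degree u = G.degree v) (hall : ∀ w ∈ G.neighborFinset v, w ≠ u → G.Adj u w) :
    ∀ w, w ≠ u → w ≠ v → (G.Adj u w ↔ G.Adj v w) := by
  have hsub : insert v ((G.neighborFinset v).erase u) ⊆ G.neighborFinset u := by
    intro w hw
    rcases mem_insert.mp hw with rfl | hw
    · exact (G.mem_neighborFinset _ _).mpr huv.symm
    · exact (G.mem_neighborFinset _ _).mpr (hall w (mem_of_mem_erase hw) (ne_of_mem_erase hw))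
  have hcard : #(G.neighborFinset u) ≤ #(insert v ((G.neighborFinset v).erase u)) := by
    rw [card_insert_of_notMem fun h => G.notMem_neighborFinset_self v (mem_of_mem_erase h),
      card_erase_of_mem ((G.mem_neighborFinset _ _).mpr huv), card_neighborFinset_eq_degree,
      card_neighborFinset_eq_degree, hdeg, Nat.sub_add_cancel huv.degree_pos_left]
  have hN := eq_of_subset_of_card_le hsub hcard
  intro w hwu hwv
  rw [← mem_neighborFinset, ← hN, ← mem_neighborFinset]
  simp [hwu, hwv]

theorem K3deg_eq_card_adjacent_pairs (v : V) :
    K3deg G v = #{e ∈ (G.neighborFinset v).powersetCard 2 | G.IsNClique 2 e} := by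
  refine card_nbij' (·.erase v) (insert v) ?_ ?_ ?_ ?_
  · intro t ht
    simp only [coe_filter, mem_cliqueFinset_iff, Set.mem_ofPred_eq, mem_powersetCard] at ht ⊢
    refine ⟨⟨fun w hw => ?_, ?_⟩, ht.1.erase_of_mem ht.2⟩
    · exact (G.mem_neighborFinset _ _).mpr
        (ht.1.isClique ht.2 (mem_of_mem_erase hw) (ne_of_mem_erase hw).symm)
    · rw [card_erase_of_mem ht.2, ht.1.card_eq]
  · intro e he
    simp only [coe_filter, mem_cliqueFinset_iff, Set.mem_ofPred_eq, mem_powersetCard] at he ⊢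
    exact ⟨he.2.insert fun w hw => (G.mem_neighborFinset _ _).mp (he.1.1 hw),
      mem_insert_self _ _⟩
  · intro t ht
    exact insert_erase (mem_filter.mp ht).2
  · intro e he
    exact erase_insert fun hv => G.notMem_neighborFinset_self v
      ((mem_powersetCard.mp (mem_filter.mp he).1).1 hv)

theorem K3deg_add_card_nonadjacent_pairs (v : V) :
    K3deg G v + #{e ∈ (G.neighborFinset v).powersetCard 2 | ¬ G.IsNClique 2 e} =
      (G.degree v).choose 2 := by
  rw [K3deg_eq_card_adjacent_pairs, card_filter_add_card_filter_not, card_powersetCard,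
    card_neighborFinset_eq_degree]

theorem K3deg_add_le_choose_two {r : ℕ} (hreg : G.IsRegularOfDegree r)
    (hinj : Function.Injective (K3deg G)) (v : V) : K3deg G v + (r + 1) / 2 ≤ r.choose 2 := by
  set M := {e ∈ (G.neighborFinset v).powersetCard 2 | ¬ G.IsNClique 2 e}
  have hsum : K3deg G v + #M = r.choose 2 := hreg v ▸ K3deg_add_card_nonadjacent_pairs v
  by_contra! hlt
  have hcover : 2 * #M < #(G.neighborFinset v) := by
    rw [card_neighborFinset_eq_degree, hreg v]
    omega
  obtain ⟨u, hu, huM⟩ := exists_mem_forall_notMem_of_mul_card_lt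
    (fun e he => (mem_powersetCard.mp (mem_filter.mp he).1).2.le) hcover
  have huv : G.Adj v u := (G.mem_neighborFinset _ _).mp hu
  have hall : ∀ w ∈ G.neighborFinset v, w ≠ u → G.Adj u w := by
    intro w hw hwu
    by_contra hnadj
    have hpair : {u, w} ∈ (G.neighborFinset v).powersetCard 2 :=
      mem_powersetCard.mpr ⟨insert_subset hu (singleton_subset_iff.mpr hw), card_pair hwu.symm⟩
    have hclique : G.IsNClique 2 {u, w} → G.Adj u w := fun h =>
      isClique_pair.mp (by simpa using h.isClique) hwu.symm
    exact huM {u, w} (mem_filter.mpr ⟨hpair, mt hclique hnadj⟩) (mem_insert_self _ _)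
  have htwins := twins_of_forall_adj_of_degree_eq huv (by rw [hreg u, hreg v]) hall
  exact G.ne_of_adj huv (hinj (K3deg_eq_of_twins htwins)).symm

end K3deg

theorem stmt11 {V : Type*} [Fintype V] [DecidableEq V] (G : SimpleGraph V) [DecidableRel G.Adj]
    (n r : ℕ) (hn : Fintype.card V = n) (hreg : G.IsRegularOfDegree r)
    (hirr : ∀ u w : V, K3deg G u = K3deg G w → u = w) :
    (n : ℤ) ≤ (r.choose 2 : ℤ) - ⌈(r : ℚ) / 2⌉ + 1 := by
  have hceil : ⌈(r : ℚ) / 2⌉ = ((r + 1) / 2 : ℕ) := by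
    have := Rat.ceil_natCast_div_natCast r 2
    push_cast at this
    rw [this]
    omega
  have hsmall : (r + 1) / 2 ≤ r.choose 2 + 1 := by
    rcases r with _ | r
    · simp
    · rw [Nat.choose_succ_succ', Nat.choose_one_right]
      omega
  have hrange : ∀ v ∈ univ, K3deg G v ∈ range (r.choose 2 + 1 - (r + 1) / 2) := fun v _ =>
    mem_range.mpr (by have := K3deg_add_le_choose_two hreg hirr v; omega)
  have hcard : n ≤ r.choose 2 + 1 - (r + 1) / 2 := by
    simpa [hn] using card_le_card_of_injOn _ hrange (Function.Injective.injOn hirr)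
  rw [hceil]
  omega
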